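/- Let f ≥ 1 be an integer and define x : ℂ → ℂ by x(y) = −(y^f + y^{f+1}). Then for every y ∈ ℂ with 0 < |y| < 1 and y ∉ (−∞, 0] (i.e., y not a nonpositive real), the function θ is complex differentiable at y with θ′(y) = log(y)·x′(y)/x(y). -/

import Mathlib

open Complex

/-!
Differentiate term by term: `Li₂'(z) = -log(1 - z) / z` inside the unit disc, so
`θ'(y) = log y · (f / y + 1 / (1 + y))`, and `f / y + 1 / (1 + y)` is the logarithmic derivative
of `x(y) = -y^f (1 + y)`.
-/

/-- The functions `Ψ̂_n(·;f)`, defined recursively by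
`Ψ̂_0(y;f) = -1/(f+(f+1)y)^2` and
`Ψ̂_n(y;f) = -(d/dy)[Ψ̂_{n-1}(y;f) · y(y+1)/(f+(f+1)y)]`. -/
noncomputable def PsiHat (f : ℂ) : ℕ → ℂ → ℂ
  | 0 => fun y => -1 / (f + (f + 1) * y) ^ 2
  | n + 1 => fun y =>
      -deriv (fun w => PsiHat f n w * (w * (w + 1) / (f + (f + 1) * w))) y

/-- The primitive `θ(y) = (f/2)(log y)^2 + (log y)·log(1+y) + Li₂(-y)`,
with `log` the principal branch and `Li₂(w) = ∑_{k≥1} w^k/k^2`. -/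
noncomputable def theta (f : ℂ) (y : ℂ) : ℂ :=
  f / 2 * Complex.log y ^ 2 + Complex.log y * Complex.log (1 + y) +
    ∑' k : ℕ, (-y) ^ (k + 1) / ((k : ℂ) + 1) ^ 2

noncomputable def dilog (z : ℂ) : ℂ :=
  ∑' k : ℕ, z ^ (k + 1) / ((k : ℂ) + 1) ^ 2

theorem norm_pow_div_natCast_add_one_le (z : ℂ) (k m : ℕ) :
    ‖z ^ k / ((m : ℂ) + 1)‖ ≤ ‖z‖ ^ k := by
  have hm : ‖(m : ℂ) + 1‖ = m + 1 := by exact_mod_cast Complex.norm_natCast (m + 1)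
  rw [norm_div, norm_pow, hm]
  exact div_le_self (by positivity) (by linarith [m.cast_nonneg (α := ℝ)])

theorem hasSum_pow_div_natCast_add_one {z : ℂ} (hz : ‖z‖ < 1) (hz0 : z ≠ 0) :
    HasSum (fun k : ℕ => z ^ k / ((k : ℂ) + 1)) (-Complex.log (1 - z) / z) := by
  refine ((hasSum_taylorSeries_neg_log' hz).div_const z).congr_fun fun k => ?_
  field_simp
  ring

/-- Termwise differentiation, justified on a disc of radius `r < 1` by the geometric bound `r ^ k`. -/
theorem hasDerivAt_dilog {z : ℂ} (hz : ‖z‖ < 1) (hz0 : z ≠ 0) :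
    HasDerivAt dilog (-Complex.log (1 - z) / z) z := by
  rw [← (hasSum_pow_div_natCast_add_one hz hz0).tsum_eq]
  obtain ⟨r, hzr, hr1⟩ := exists_between hz
  have hr0 : 0 < r := (norm_nonneg z).trans_lt hzr
  refine hasDerivAt_tsum_of_isPreconnected (u := fun k : ℕ => r ^ k)
    (g := fun k w => w ^ (k + 1) / ((k : ℂ) + 1) ^ 2) (g' := fun k w => w ^ k / ((k : ℂ) + 1))
    (summable_geometric_of_lt_one hr0.le hr1) Metric.isOpen_ball
    (convex_ball (0 : ℂ) r).isPreconnected (fun k w _ => ?_) (fun k w hw => ?_)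
    (Metric.mem_ball_self hr0) ?_ (mem_ball_zero_iff.mpr hzr)
  · refine ((hasDerivAt_pow (k + 1) w).div_const (((k : ℂ) + 1) ^ 2)).congr_deriv ?_
    have hk := Nat.cast_add_one_ne_zero (R := ℂ) k
    push_cast
    field_simp
  · exact (norm_pow_div_natCast_add_one_le w k k).trans
      (pow_le_pow_left₀ (norm_nonneg w) (mem_ball_zero_iff.mp hw).le k)
  · simp

theorem mem_slitPlane_of_notMem_ofReal_image_Iic {z : ℂ}
    (hz : z ∉ Complex.ofReal '' Set.Iic 0) : z ∈ slitPlane := by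
  rw [mem_slitPlane_iff_not_le_zero, nonpos_iff]
  rintro ⟨hre, him⟩
  exact hz ⟨z.re, hre, Complex.ext rfl him.symm⟩

theorem hasDerivAt_theta (f : ℂ) {y : ℂ} (hy : y ∈ slitPlane) (h1 : ‖y‖ < 1) :
    HasDerivAt (theta f) (Complex.log y * (f / y + 1 / (1 + y))) y := by
  have hy0 := slitPlane_ne_zero hy
  have hy1 := mem_slitPlane_of_norm_lt_one h1
  have hlog := hasDerivAt_log hy
  have hlog1 : HasDerivAt (fun w => Complex.log (1 + w)) (1 + y)⁻¹ y :=
    (hasDerivAt_log hy1).comp_const_add 1 y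
  have hLi : HasDerivAt (fun w => dilog (-w)) (-Complex.log (1 - -y) / -y * -1) y :=
    (hasDerivAt_dilog (by rwa [norm_neg]) (neg_ne_zero.mpr hy0)).comp y (hasDerivAt_neg y)
  refine ((((hlog.pow 2).const_mul (f / 2)).add (hlog.mul hlog1)).add hLi).congr_deriv ?_
  have hy1' := slitPlane_ne_zero hy1
  norm_num [sub_neg_eq_add]
  field_simp
  ring

theorem logDeriv_neg_pow_add_pow_succ {𝕜 : Type*} [NontriviallyNormedField 𝕜] (f : ℕ) {y : 𝕜}
    (hy0 : y ≠ 0) (hy1 : 1 + y ≠ 0) :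
    logDeriv (fun w : 𝕜 => -(w ^ f + w ^ (f + 1))) y = f / y + 1 / (1 + y) := by
  have hfactor : (fun w : 𝕜 => -(w ^ f + w ^ (f + 1))) = fun w => -1 * (w ^ f * (1 + w)) := by
    funext w; ring
  rw [hfactor, logDeriv_const_mul _ _ (neg_ne_zero.mpr one_ne_zero),
    logDeriv_mul (f := (· ^ f)) (g := (1 + ·)) y (pow_ne_zero f hy0) hy1 (by fun_prop)
      (by fun_prop), logDeriv_pow]
  simp [logDeriv_apply]

theorem hasDerivAt_theta_eq_log_mul_dx_div_x_general
    (f : ℕ) (y : ℂ)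
    (h1 : ‖y‖ < 1)
    (hy : y ∉ Complex.ofReal '' Set.Iic (0 : ℝ)) :
    HasDerivAt (theta (f : ℂ))
      (Complex.log y * deriv (fun w : ℂ => -(w ^ f + w ^ (f + 1))) y /
        (-(y ^ f + y ^ (f + 1)))) y := by
  have hys := mem_slitPlane_of_notMem_ofReal_image_Iic hy
  have hx : deriv (fun w : ℂ => -(w ^ f + w ^ (f + 1))) y / (-(y ^ f + y ^ (f + 1))) =
      f / y + 1 / (1 + y) :=
    logDeriv_neg_pow_add_pow_succ f (slitPlane_ne_zero hys)
      (slitPlane_ne_zero (mem_slitPlane_of_norm_lt_one h1))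
  rw [mul_div_assoc, hx]
  exact hasDerivAt_theta f hys h1

/-- `θ` is a primitive of `ω = log y · dx/x` on the framed mirror curve of
`ℂ³`: with `x(y) = -(y^f + y^(f+1))`, for `0 < |y| < 1` with `y` not a
nonpositive real, `θ` is complex differentiable at `y` with
`θ'(y) = log(y) · x'(y) / x(y)`. -/
theorem hasDerivAt_theta_eq_log_mul_dx_div_x
    (f : ℕ) (hf : 1 ≤ f) (y : ℂ)
    (h0 : 0 < ‖y‖) (h1 : ‖y‖ < 1)
    (hy : y ∉ Complex.ofReal '' Set.Iic (0 : ℝ)) :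
    HasDerivAt (theta (f : ℂ))
      (Complex.log y * deriv (fun w : ℂ => -(w ^ f + w ^ (f + 1))) y /
        (-(y ^ f + y ^ (f + 1)))) y :=
  hasDerivAt_theta_eq_log_mul_dx_div_x_general f y h1 hy
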